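/- arXiv:2504.15572 — 3 statements merged into one kernel-verified Lean document; each statement's English description precedes it below -/
import Mathlib

section
/- Let φ(ξ,η) = |ξ|⁴ − |η|⁴ − |ξ−η|⁴ and P(ξ,η) = −η + ξ/5 for ξ, η ∈ ℝ⁵. Define Z(ξ,η) = φ(ξ,η) + P(ξ,η)·∂_η φ(ξ,η). Then Z(ξ,η) ≥ (1/2)(|η|⁴ + |ξ|⁴) for all ξ, η ∈ ℝ⁵. -/
noncomputable section

local notation "E" => EuclideanSpace ℝ (Fin 5)

section InnerProductSpace

variable {V : Type*} [NormedAddCommGroup V] [InnerProductSpace ℝ V]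

open RealInnerProductSpace

theorem phi_add_inner_deriv_eq (ξ η : V) :
    (‖ξ‖ ^ 4 - ‖η‖ ^ 4 - ‖ξ - η‖ ^ 4)
        + ⟪-η + (5 : ℝ)⁻¹ • ξ, (4 * ‖ξ - η‖ ^ 2) • (ξ - η) - (4 * ‖η‖ ^ 2) • η⟫
      = 6 * (‖η‖ ^ 2) ^ 2 + 4 / 5 * (‖ξ‖ ^ 2) ^ 2 + 28 / 5 * ⟪η, ξ⟫ ^ 2
          - 48 / 5 * ‖η‖ ^ 2 * ⟪η, ξ⟫ - 12 / 5 * ‖ξ‖ ^ 2 * ⟪η, ξ⟫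
          + 14 / 5 * ‖η‖ ^ 2 * ‖ξ‖ ^ 2 := by
  have h_sub : ‖ξ - η‖ ^ 2 = ‖ξ‖ ^ 2 - 2 * ⟪η, ξ⟫ + ‖η‖ ^ 2 := by
    rw [norm_sub_sq_real, real_inner_comm]
  rw [show ‖ξ - η‖ ^ 4 = (‖ξ - η‖ ^ 2) ^ 2 by ring, h_sub]
  simp only [inner_add_left, inner_sub_right, inner_neg_left, real_inner_smul_left,
    real_inner_smul_right, real_inner_self_eq_norm_sq, real_inner_comm η ξ]
  ring

end InnerProductSpace

/-- With `a = |η|²`, `b = |ξ|²`, `c = η·ξ`, the difference of the two sides times `140` is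
`(28c − 24a − 6b)² + 194a² + 6b² + 104ab`. -/
theorem half_sq_add_sq_le_quartic {a b : ℝ} (ha : 0 ≤ a) (hb : 0 ≤ b) (c : ℝ) :
    1 / 2 * (a ^ 2 + b ^ 2) ≤
      6 * a ^ 2 + 4 / 5 * b ^ 2 + 28 / 5 * c ^ 2 - 48 / 5 * a * c - 12 / 5 * b * c
        + 14 / 5 * a * b := by
  nlinarith [sq_nonneg (28 * c - 24 * a - 6 * b), sq_nonneg a, sq_nonneg b, mul_nonneg ha hb]

/-- With `φ(ξ,η) = |ξ|⁴ − |η|⁴ − |ξ−η|⁴`, `P(ξ,η) = −η + ξ/5`, and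
`Z = φ + P · ∂_η φ` (where `∂_η φ = 4|ξ−η|²(ξ−η) − 4|η|²η`), one has
`Z(ξ,η) ≥ (1/2)(|η|⁴ + |ξ|⁴)`. -/
theorem Z_lower_bound (ξ η : E) :
    (1 / 2) * (‖η‖ ^ 4 + ‖ξ‖ ^ 4) ≤
      (‖ξ‖ ^ 4 - ‖η‖ ^ 4 - ‖ξ - η‖ ^ 4)
        + (inner ℝ (-η + (5 : ℝ)⁻¹ • ξ)
            ((4 * ‖ξ - η‖ ^ 2) • (ξ - η) - (4 * ‖η‖ ^ 2) • η) : ℝ) := by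
  rw [phi_add_inner_deriv_eq, show ‖η‖ ^ 4 = (‖η‖ ^ 2) ^ 2 by ring,
    show ‖ξ‖ ^ 4 = (‖ξ‖ ^ 2) ^ 2 by ring]
  exact half_sq_add_sq_le_quartic (by positivity) (by positivity) _
end
end

section
/- Let ψ(ξ,η,σ) = |ξ|⁴ − |ξ−η|⁴ − |η−σ|⁴ − |σ|⁴, Q(ξ,η,σ) = 2ξ − 3η, and S(ξ,η,σ) = ξ − 3σ, with ξ,η,σ ∈ ℝ⁵. Define Y = ψ + Q·∂_η ψ + S·∂_σ ψ. Then Y(ξ,η,σ) ≥ 4(|ξ−η|⁴ + |η−σ|⁴ + |σ|⁴) for all ξ,η,σ ∈ ℝ⁵. -/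
/-!
Write `a = ξ - η`, `b = η - σ`, `c = σ`, so that `ξ = a + b + c`. Then `Q = 3a - ξ`,
`S - Q = 3b - ξ` and `-S = 3c - ξ`, hence
`Y = |ξ|⁴ - Σ |v|⁴ + Σ 4|v|² ⟨3v - ξ, v⟩` over `v ∈ {a, b, c}`. By Cauchy–Schwarz and the
sharp inequality `4t³u ≤ 7t⁴ + (27/343) u⁴`, each summand is at least `5|v|⁴ - (27/343)|ξ|⁴`,
and `3 · 27/343 < 1`.
-/

noncomputable section

local notation "E" => EuclideanSpace ℝ (Fin 5)

open RealInnerProductSpace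

-- `343 (7t⁴ + (27/343) u⁴ - 4t³u) = (3u - 7t)² (3u² + 14tu + 49t²)`, equality at `u = 7t/3`.
theorem four_mul_pow_three_mul_le (t u : ℝ) : 4 * t ^ 3 * u ≤ 7 * t ^ 4 + 27 / 343 * u ^ 4 := by
  have h : 0 ≤ (3 * u - 7 * t) ^ 2 * (3 * u ^ 2 + 14 * t * u + 49 * t ^ 2) :=
    mul_nonneg (sq_nonneg _) (by nlinarith [sq_nonneg (3 * u + 7 * t), sq_nonneg t])
  nlinarith [h]

section InnerProductSpace

variable {F : Type*} [NormedAddCommGroup F] [InnerProductSpace ℝ F]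

theorem inner_sub_right_add_inner_sub_right (x y u v w : F) :
    ⟪x, u - v⟫ + ⟪y, v - w⟫ = ⟪x, u⟫ + ⟪y - x, v⟫ + ⟪-y, w⟫ := by
  simp only [inner_sub_right, inner_sub_left, inner_neg_left]
  ring

theorem four_mul_norm_sq_mul_inner_le (v s : F) :
    4 * ‖v‖ ^ 2 * ⟪s, v⟫ ≤ 7 * ‖v‖ ^ 4 + 27 / 343 * ‖s‖ ^ 4 :=
  calc 4 * ‖v‖ ^ 2 * ⟪s, v⟫ ≤ 4 * ‖v‖ ^ 2 * (‖s‖ * ‖v‖) := by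
        gcongr
        exact real_inner_le_norm s v
    _ = 4 * ‖v‖ ^ 3 * ‖s‖ := by ring
    _ ≤ 7 * ‖v‖ ^ 4 + 27 / 343 * ‖s‖ ^ 4 := four_mul_pow_three_mul_le _ _

theorem le_inner_three_smul_sub_smul (v s : F) :
    5 * ‖v‖ ^ 4 - 27 / 343 * ‖s‖ ^ 4 ≤ ⟪(3 : ℝ) • v - s, (4 * ‖v‖ ^ 2) • v⟫ := by
  have h : ⟪(3 : ℝ) • v - s, (4 * ‖v‖ ^ 2) • v⟫ = 12 * ‖v‖ ^ 4 - 4 * ‖v‖ ^ 2 * ⟪s, v⟫ := by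
    simp only [inner_sub_left, inner_smul_left, inner_smul_right, real_inner_self_eq_norm_sq,
      RCLike.conj_to_real]
    ring
  linarith [four_mul_norm_sq_mul_inner_le v s]

end InnerProductSpace

/-- For `ψ(ξ,η,σ) = |ξ|⁴ − |ξ−η|⁴ − |η−σ|⁴ − |σ|⁴`, `Q = 2ξ − 3η`, `S = ξ − 3σ`, the
quantity `Y = ψ + Q·∂_η ψ + S·∂_σ ψ` satisfies `Y ≥ 4(|ξ−η|⁴ + |η−σ|⁴ + |σ|⁴)`. -/
theorem Y_lower_bound (ξ η σ : E) :
    4 * (‖ξ - η‖ ^ 4 + ‖η - σ‖ ^ 4 + ‖σ‖ ^ 4) ≤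
      (‖ξ‖ ^ 4 - ‖ξ - η‖ ^ 4 - ‖η - σ‖ ^ 4 - ‖σ‖ ^ 4)
        + (inner ℝ ((2 : ℝ) • ξ - (3 : ℝ) • η)
            ((4 * ‖ξ - η‖ ^ 2) • (ξ - η) - (4 * ‖η - σ‖ ^ 2) • (η - σ)) : ℝ)
        + (inner ℝ (ξ - (3 : ℝ) • σ)
            ((4 * ‖η - σ‖ ^ 2) • (η - σ) - (4 * ‖σ‖ ^ 2) • σ) : ℝ) := by
  have hSQ : (ξ - (3 : ℝ) • σ) - ((2 : ℝ) • ξ - (3 : ℝ) • η) = (3 : ℝ) • (η - σ) - ξ := by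
    module
  have hS : -(ξ - (3 : ℝ) • σ) = (3 : ℝ) • σ - ξ := by module
  have hQ : (2 : ℝ) • ξ - (3 : ℝ) • η = (3 : ℝ) • (ξ - η) - ξ := by module
  have hsplit := inner_sub_right_add_inner_sub_right ((2 : ℝ) • ξ - (3 : ℝ) • η)
    (ξ - (3 : ℝ) • σ) ((4 * ‖ξ - η‖ ^ 2) • (ξ - η)) ((4 * ‖η - σ‖ ^ 2) • (η - σ))
    ((4 * ‖σ‖ ^ 2) • σ)
  rw [hSQ, hS] at hsplit
  rw [hQ] at hsplit ⊢
  linarith [le_inner_three_smul_sub_smul (ξ - η) ξ, le_inner_three_smul_sub_smul (η - σ) ξ,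
    le_inner_three_smul_sub_smul σ ξ, pow_nonneg (norm_nonneg ξ) 4]
end
end

section
/- Let φ_ξ(η) = |η|⁴ + |ξ−η|⁴ on ℝ⁵. Then |∇_η φ_ξ(η)| ≳ |η − ξ/2| (|η|² + |ξ−η|²) for all η, ξ ∈ ℝ⁵, with an absolute constant. -/
noncomputable section

local notation "E" => EuclideanSpace ℝ (Fin 5)

open scoped RealInnerProductSpace

/-!
The gradient is `4 (|a|² a − |b|² b)` with `a = η`, `b = ξ − η`, and `a − b = 2 (η − ξ/2)`.
Writing `⟪a, b⟫` through `|a − b|²`, the map `x ↦ |x|² x` satisfies the exact identity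
`2 ⟪|a|² a − |b|² b, a − b⟫ = |a − b|² (|a|² + |b|²) + (|a|² − |b|²)²`,
so Cauchy–Schwarz gives `|a − b| (|a|² + |b|²) ≤ 2 ||a|² a − |b|² b|`.
-/

section NormSqSmul

variable {F : Type*} [NormedAddCommGroup F] [InnerProductSpace ℝ F]

theorem two_mul_inner_norm_sq_smul_sub_sub (a b : F) :
    2 * ⟪‖a‖ ^ 2 • a - ‖b‖ ^ 2 • b, a - b⟫ =
      ‖a - b‖ ^ 2 * (‖a‖ ^ 2 + ‖b‖ ^ 2) + (‖a‖ ^ 2 - ‖b‖ ^ 2) ^ 2 := by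
  rw [norm_sub_sq_real]
  simp only [inner_sub_left, inner_sub_right, real_inner_smul_left,
    real_inner_self_eq_norm_sq, real_inner_comm a b]
  ring

theorem norm_sub_mul_le_two_mul_norm_norm_sq_smul_sub (a b : F) :
    ‖a - b‖ * (‖a‖ ^ 2 + ‖b‖ ^ 2) ≤ 2 * ‖‖a‖ ^ 2 • a - ‖b‖ ^ 2 • b‖ := by
  rcases (norm_nonneg (a - b)).eq_or_lt with hd | hd
  · rw [← hd, zero_mul]
    positivity
  have hcs := real_inner_le_norm (‖a‖ ^ 2 • a - ‖b‖ ^ 2 • b) (a - b)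
  have hid := two_mul_inner_norm_sq_smul_sub_sub a b
  refine le_of_mul_le_mul_right ?_ hd
  nlinarith [sq_nonneg (‖a‖ ^ 2 - ‖b‖ ^ 2)]

end NormSqSmul

/-- For `φ_ξ(η) = |η|⁴ + |ξ−η|⁴` with `∇_η φ_ξ(η) = 4|η|²η − 4|ξ−η|²(ξ−η)`, one has
`|∇_η φ_ξ(η)| ≳ |η − ξ/2| (|η|² + |ξ−η|²)` with an absolute constant. -/
theorem bilinear_phase_gradient_lower_bound :
    ∃ c : ℝ, 0 < c ∧ ∀ (ξ η : E),
      c * ‖η - (2 : ℝ)⁻¹ • ξ‖ * (‖η‖ ^ 2 + ‖ξ - η‖ ^ 2) ≤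
        ‖(4 * ‖η‖ ^ 2) • η - (4 * ‖ξ - η‖ ^ 2) • (ξ - η)‖ := by
  refine ⟨4, four_pos, fun ξ η => ?_⟩
  have hhalf : η - (2 : ℝ)⁻¹ • ξ = (2 : ℝ)⁻¹ • (η - (ξ - η)) := by module
  have hgrad : (4 * ‖η‖ ^ 2) • η - (4 * ‖ξ - η‖ ^ 2) • (ξ - η) =
      (4 : ℝ) • (‖η‖ ^ 2 • η - ‖ξ - η‖ ^ 2 • (ξ - η)) := by module
  have key := norm_sub_mul_le_two_mul_norm_norm_sq_smul_sub η (ξ - η)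
  calc 4 * ‖η - (2 : ℝ)⁻¹ • ξ‖ * (‖η‖ ^ 2 + ‖ξ - η‖ ^ 2)
      = 2 * (‖η - (ξ - η)‖ * (‖η‖ ^ 2 + ‖ξ - η‖ ^ 2)) := by
        rw [hhalf, norm_smul]; norm_num; ring
    _ ≤ 4 * ‖‖η‖ ^ 2 • η - ‖ξ - η‖ ^ 2 • (ξ - η)‖ := by linarith
    _ = _ := by rw [hgrad, norm_smul]; norm_num
end
end
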